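/- arXiv:1903.03794 — 2 statements merged into one kernel-verified Lean document; each statement's English description precedes it below -/
import Mathlib

section
/- The rational equation (m-1)(m+1)/(2m(k+m)) + (n-1)(n+1)/(2n(-k+n)) + (n-m)/(2mnk) = 1, for integers m > n ≥ 2, has solution set {1, -1, (n-m)/2} in the complex numbers k (with k ≠ 0, k ≠ -m, k ≠ n). -/
/-- The conformal embedding equation for `g₀ ⊂ sl(m|n)`, `m > n ≥ 2`, has
solution set `{1, -1, (n-m)/2}`. -/
theorem solutions_sl_mn (m n : ℕ) (hn : 2 ≤ n) (hmn : n < m) (k : ℂ)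
    (hk0 : k ≠ 0) (hkm : k ≠ -(m : ℂ)) (hkn : k ≠ (n : ℂ)) :
    ((m : ℂ) - 1) * ((m : ℂ) + 1) / (2 * m * (k + m)) +
      ((n : ℂ) - 1) * ((n : ℂ) + 1) / (2 * n * (-k + n)) +
      ((n : ℂ) - (m : ℂ)) / (2 * m * n * k) = 1 ↔
    k = 1 ∨ k = -1 ∨ k = ((n : ℂ) - (m : ℂ)) / 2 := by
  have hn0 : (n:ℂ) ≠ 0 := Nat.cast_ne_zero.mpr (by omega)
  have hm0 : (m:ℂ) ≠ 0 := Nat.cast_ne_zero.mpr (by omega)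
  have hkm' : k + (m:ℂ) ≠ 0 := fun h => hkm (by linear_combination h)
  have hkn' : -k + (n:ℂ) ≠ 0 := fun h => hkn (by linear_combination -h)
  rw [div_add_div _ _ (by simp [hm0, hkm']) (by simp [hn0, hkn']),
      div_add_div _ _ (by simp [hm0, hn0, hkm', hkn'] ) (by simp [hm0, hn0, hk0]),
      div_eq_one_iff_eq (by simp [hm0, hn0, hkm', hkn', hk0])]
  constructor
  · intro h
    have h3 : (4*(m:ℂ)*m*n*n) * ((k - 1) * ((k + 1) * (2*k + (m:ℂ) - n))) = 0 := by
      linear_combination h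
    rcases mul_eq_zero.mp h3 with h4 | h4
    · exact absurd h4 (by simp [hm0, hn0])
    rcases mul_eq_zero.mp h4 with h5 | h5
    · exact Or.inl (by linear_combination h5)
    rcases mul_eq_zero.mp h5 with h6 | h6
    · exact Or.inr (Or.inl (by linear_combination h6))
    · exact Or.inr (Or.inr (by linear_combination h6 / 2))
  · rintro (rfl | rfl | rfl) <;> ring
end

section
/- For integers n ≥ 2, i ≥ 1, and 0 ≤ j ≤ n, the equation n(2n+6+i)i + (n+2)j(j+6) = 2j(2n+2-j) has no solutions; and for i = 0, the only solution with 0 ≤ j ≤ n is j = 0. Equivalently, the equality (i² + j + (2n+6)i + 6j + j(j-1))/8 = (i(2n+6+i) + (2n+2-j)j)/(4(n+2)) holds for nonnegative integers i and 0 ≤ j ≤ n only when (i,j) = (0,0). -/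
/-- The Diophantine conditions showing that the embedding
`V_{-2}(so(2n+8)) ⊗ V_1(sp(2n)) ⊂ V_{-2}(osp(2n+8|2n))` is not conformal. -/
theorem non_conformal_diophantine (n : ℕ) (hn : 2 ≤ n) :
    (∀ i j : ℕ, 1 ≤ i → j ≤ n →
      (n : ℤ) * (2 * n + 6 + i) * i + ((n : ℤ) + 2) * j * (j + 6) ≠
        2 * j * (2 * (n : ℤ) + 2 - j)) ∧
    (∀ j : ℕ, j ≤ n →
      (((n : ℤ) + 2) * j * (j + 6) = 2 * j * (2 * (n : ℤ) + 2 - j) ↔ j = 0)) ∧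
    (∀ i j : ℕ, j ≤ n →
      (((i : ℚ) ^ 2 + (j : ℚ) + (2 * (n : ℚ) + 6) * i + 6 * j + (j : ℚ) * ((j : ℚ) - 1)) / 8 =
          ((i : ℚ) * (2 * (n : ℚ) + 6 + i) + (2 * (n : ℚ) + 2 - j) * j) / (4 * ((n : ℚ) + 2)) ↔
        i = 0 ∧ j = 0)) := by
  have hn' : (2 : ℤ) ≤ (n : ℤ) := by exact_mod_cast hn
  refine ⟨?_, ?_, ?_⟩
  · intro i j hi hj h
    have hi' : (1 : ℤ) ≤ (i : ℤ) := by exact_mod_cast hi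
    have hj0 : (0 : ℤ) ≤ (j : ℤ) := Int.ofNat_nonneg j
    have key : (n : ℤ) * (2 * n + 6 + i) * i + ((n : ℤ) + 4) * j ^ 2 + (2 * n + 8) * j = 0 := by
      linear_combination h
    have h1 : (0 : ℤ) < (n : ℤ) * (2 * n + 6 + i) * i :=
      mul_pos (mul_pos (by linarith) (by linarith)) (by linarith)
    have h2 : (0 : ℤ) ≤ ((n : ℤ) + 4) * j ^ 2 :=
      mul_nonneg (by linarith) (sq_nonneg _)
    have h3 : (0 : ℤ) ≤ (2 * (n : ℤ) + 8) * j := mul_nonneg (by linarith) hj0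
    linarith
  · intro j hj
    constructor
    · intro h
      have hj0 : (0 : ℤ) ≤ (j : ℤ) := Int.ofNat_nonneg j
      have key : ((n : ℤ) + 4) * j ^ 2 + (2 * n + 8) * j = 0 := by linear_combination h
      have : (j : ℤ) = 0 := by
        by_contra hne
        have hjp : (0 : ℤ) < (j : ℤ) := lt_of_le_of_ne hj0 (Ne.symm hne)
        have h2 : (0 : ℤ) < ((n : ℤ) + 4) * j ^ 2 :=
          mul_pos (by linarith) (by positivity)
        have h3 : (0 : ℤ) < (2 * (n : ℤ) + 8) * j := mul_pos (by linarith) hjp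
        linarith
      exact_mod_cast this
    · rintro rfl; simp
  · intro i j hj
    have hnq : (2 : ℚ) ≤ (n : ℚ) := by exact_mod_cast hn
    constructor
    · intro h
      have hd : (4 : ℚ) * ((n : ℚ) + 2) ≠ 0 := by positivity
      field_simp at h
      have hi0 : (0 : ℚ) ≤ (i : ℚ) := Nat.cast_nonneg i
      have hj0 : (0 : ℚ) ≤ (j : ℚ) := Nat.cast_nonneg j
      have key : 4 * ((n : ℚ) * (2 * n + 6 + i) * i + ((n : ℚ) + 4) * j ^ 2 + (2 * n + 8) * j)
          = 0 := by linear_combination h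
      have h1 : (0 : ℚ) ≤ (n : ℚ) * (2 * n + 6 + i) * i :=
        mul_nonneg (mul_nonneg (by linarith) (by linarith)) hi0
      have h2 : (0 : ℚ) ≤ ((n : ℚ) + 4) * j ^ 2 := mul_nonneg (by linarith) (sq_nonneg _)
      have h3 : (0 : ℚ) ≤ (2 * (n : ℚ) + 8) * j := mul_nonneg (by linarith) hj0
      have hjeq : (j : ℚ) = 0 := by
        by_contra hne
        have hjp : (0 : ℚ) < (j : ℚ) := lt_of_le_of_ne hj0 (Ne.symm hne)
        have : (0 : ℚ) < (2 * (n : ℚ) + 8) * j := mul_pos (by linarith) hjp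
        linarith
      have hieq : (i : ℚ) = 0 := by
        by_contra hne
        have hip : (0 : ℚ) < (i : ℚ) := lt_of_le_of_ne hi0 (Ne.symm hne)
        have : (0 : ℚ) < (n : ℚ) * (2 * n + 6 + i) * i :=
          mul_pos (mul_pos (by linarith) (by linarith)) hip
        linarith
      exact ⟨by exact_mod_cast hieq, by exact_mod_cast hjeq⟩
    · rintro ⟨rfl, rfl⟩; simp
end
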